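/- arXiv:1705.09237 — 7 statements merged into one kernel-verified Lean document; each statement's English description precedes it below -/
import Mathlib

section
/- Let ψ_ν(t) = t^ν − t^{−ν} for ν > 0. For 0 < a < b and a ≤ s ≤ b, define f_{ν,s}(t) = ψ_ν(t/a)·ψ_ν(b/s)/ψ_ν(b/a) for a ≤ t ≤ s and f_{ν,s}(t) = ψ_ν(s/a)·ψ_ν(b/t)/ψ_ν(b/a) for s < t ≤ b. Then max_{t∈[a,b]} f_{ν,s}(t) = f_{ν,s}(s), and max_{s∈[a,b]} f_{ν,s}(s) = f_{ν,√(ab)}(√(ab)) = (1 − (a/b)^ν)/(1 + (a/b)^ν) ≤ 1. -/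
/-!
Write `ψ = psi ν`. Since `ψ` is increasing on `(0, ∞)` and nonnegative on `[1, ∞)`, each branch of
`f_{ν,s}` is monotone in `t` towards `t = s`. On the diagonal,
`ψ(x) ψ(y) = χ(x y) - χ(x / y)` with `χ(t) = t^ν + t^{-ν} ≥ 2 = χ(1)`, and `(s/a)(b/s) = b/a` does not
depend on `s`; so `f_{ν,s}(s)` is largest when `s/a = b/s`, i.e. `s = √(ab)`, where it equals
`(χ(b/a) - 2) / ψ(b/a)`. With `x = (a/b)^ν` this is `(x⁻¹ + x - 2) / (x⁻¹ - x) = (1 - x) / (1 + x)`.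
-/

open Real Set

noncomputable section

def psi (ν t : ℝ) : ℝ := t ^ ν - t ^ (-ν)

def psiKernel (ν a b s t : ℝ) : ℝ :=
  if t ≤ s then psi ν (t / a) * psi ν (b / s) / psi ν (b / a)
  else psi ν (s / a) * psi ν (b / t) / psi ν (b / a)

end

section Psi

variable {ν x y : ℝ}

lemma psi_eq_rpow_sub_inv (hx : 0 ≤ x) : psi ν x = x ^ ν - (x ^ ν)⁻¹ := by
  rw [psi, rpow_neg hx]

lemma psi_one : psi ν 1 = 0 := by
  simp [psi]

lemma psi_monotoneOn (hν : 0 ≤ ν) : MonotoneOn (psi ν) (Ioi 0) := by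
  intro x hx y _ hxy
  have h₁ : x ^ ν ≤ y ^ ν := rpow_le_rpow (le_of_lt hx) hxy hν
  have h₂ : y ^ (-ν) ≤ x ^ (-ν) := rpow_le_rpow_of_nonpos hx hxy (neg_nonpos.2 hν)
  simp only [psi]
  linarith

lemma psi_nonneg (hν : 0 ≤ ν) (hx : 1 ≤ x) : 0 ≤ psi ν x :=
  psi_one (ν := ν) ▸ psi_monotoneOn hν (mem_Ioi.2 one_pos) (mem_Ioi.2 (one_pos.trans_le hx)) hx

lemma psi_mul_psi (hx : 0 < x) (hy : 0 < y) :
    psi ν x * psi ν y = (x * y) ^ ν + (x * y) ^ (-ν) - ((x / y) ^ ν + (x / y) ^ (-ν)) := by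
  have hxν := rpow_pos_of_pos hx ν
  have hyν := rpow_pos_of_pos hy ν
  rw [psi_eq_rpow_sub_inv hx.le, psi_eq_rpow_sub_inv hy.le, rpow_neg (by positivity),
    rpow_neg (by positivity), mul_rpow hx.le hy.le, div_rpow hx.le hy.le]
  field_simp
  ring

lemma two_le_rpow_add_rpow_neg (hx : 0 < x) : 2 ≤ x ^ ν + x ^ (-ν) := by
  have hxν := rpow_pos_of_pos hx ν
  rw [rpow_neg hx.le, ← sub_nonneg]
  have key : x ^ ν + (x ^ ν)⁻¹ - 2 = (x ^ ν - 1) ^ 2 / x ^ ν := by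
    field_simp
    ring
  rw [key]
  positivity

lemma psi_mul_psi_le (hx : 0 < x) (hy : 0 < y) :
    psi ν x * psi ν y ≤ (x * y) ^ ν + (x * y) ^ (-ν) - 2 := by
  rw [psi_mul_psi hx hy]
  linarith [two_le_rpow_add_rpow_neg (ν := ν) (div_pos hx hy)]

end Psi

lemma inv_add_sub_two_div_inv_sub {x : ℝ} (hx₀ : 0 < x) (hx₁ : x ≠ 1) :
    (x⁻¹ + x - 2) / (x⁻¹ - x) = (1 - x) / (1 + x) := by
  have hnum : x⁻¹ + x - 2 = (1 - x) * (1 - x) / x := by field_simp; ring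
  have hden : x⁻¹ - x = (1 - x) * (1 + x) / x := by field_simp; ring
  rw [hnum, hden, div_div_div_cancel_right₀ hx₀.ne', mul_div_mul_left _ _ (sub_ne_zero.2 hx₁.symm)]

lemma sqrt_mul_mem_Icc {a b : ℝ} (ha : 0 ≤ a) (hab : a ≤ b) : √(a * b) ∈ Icc a b := by
  constructor
  · calc a = √(a * a) := (sqrt_mul_self ha).symm
      _ ≤ √(a * b) := sqrt_le_sqrt (mul_le_mul_of_nonneg_left hab ha)
  · calc √(a * b) ≤ √(b * b) := sqrt_le_sqrt (mul_le_mul_of_nonneg_right hab (ha.trans hab))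
      _ = b := sqrt_mul_self (ha.trans hab)

lemma psi_mul_psi_sqrt {ν a b : ℝ} (ha : 0 < a) (hb : 0 < b) :
    psi ν (√(a * b) / a) * psi ν (b / √(a * b)) = (b / a) ^ ν + (b / a) ^ (-ν) - 2 := by
  have hm : 0 < √(a * b) := sqrt_pos.2 (mul_pos ha hb)
  have hprod : √(a * b) / a * (b / √(a * b)) = b / a := by field_simp
  have hquot : √(a * b) / a / (b / √(a * b)) = 1 := by
    rw [div_div_div_eq, mul_self_sqrt (mul_pos ha hb).le, div_self (mul_pos ha hb).ne']
  rw [psi_mul_psi (div_pos hm ha) (div_pos hb hm), hprod, hquot, one_rpow, one_rpow]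
  norm_num

section PsiKernel

variable {ν a b s t : ℝ}

lemma psiKernel_self : psiKernel ν a b s s = psi ν (s / a) * psi ν (b / s) / psi ν (b / a) :=
  if_pos le_rfl

lemma psiKernel_le_self (hν : 0 ≤ ν) (ha : 0 < a) (hs : s ∈ Icc a b) (ht : 0 < t) :
    psiKernel ν a b s t ≤ psiKernel ν a b s s := by
  have hs₀ : 0 < s := ha.trans_le hs.1
  have hb : 0 < b := hs₀.trans_le hs.2
  have hD : 0 ≤ psi ν (b / a) := psi_nonneg hν ((one_le_div ha).2 (hs.1.trans hs.2))
  rw [psiKernel_self, psiKernel]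
  split_ifs with hts
  · have hψt : psi ν (t / a) ≤ psi ν (s / a) :=
      psi_monotoneOn hν (div_pos ht ha) (div_pos hs₀ ha) (div_le_div_of_nonneg_right hts ha.le)
    have hψb : 0 ≤ psi ν (b / s) := psi_nonneg hν ((one_le_div hs₀).2 hs.2)
    gcongr
  · have hψt : psi ν (b / t) ≤ psi ν (b / s) :=
      psi_monotoneOn hν (div_pos hb ht) (div_pos hb hs₀)
        (div_le_div_of_nonneg_left hb.le hs₀ (not_le.1 hts).le)
    have hψs : 0 ≤ psi ν (s / a) := psi_nonneg hν ((one_le_div ha).2 hs.1)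
    gcongr

lemma psiKernel_self_le_sqrt (hν : 0 ≤ ν) (ha : 0 < a) (hab : a ≤ b) (hs : 0 < s) :
    psiKernel ν a b s s ≤ psiKernel ν a b √(a * b) √(a * b) := by
  have hb : 0 < b := ha.trans_le hab
  have hprod : s / a * (b / s) = b / a := by field_simp
  have hψs := psi_mul_psi_le (ν := ν) (div_pos hs ha) (div_pos hb hs)
  rw [hprod] at hψs
  have hD : 0 ≤ psi ν (b / a) := psi_nonneg hν ((one_le_div ha).2 hab)
  rw [psiKernel_self, psiKernel_self, psi_mul_psi_sqrt ha hb]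
  gcongr

lemma psiKernel_sqrt (hν : 0 < ν) (ha : 0 < a) (hab : a < b) :
    psiKernel ν a b √(a * b) √(a * b) = (1 - (a / b) ^ ν) / (1 + (a / b) ^ ν) := by
  have hb : 0 < b := ha.trans hab
  have hinv : (b / a) ^ ν = ((a / b) ^ ν)⁻¹ := by rw [← inv_rpow (div_pos ha hb).le, inv_div]
  rw [psiKernel_self, psi_mul_psi_sqrt ha hb, psi, rpow_neg (div_pos hb ha).le, hinv, inv_inv]
  exact inv_add_sub_two_div_inv_sub (rpow_pos_of_pos (div_pos ha hb) ν)
    (rpow_lt_one (div_pos ha hb).le ((div_lt_one hb).2 hab) hν).ne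

end PsiKernel

theorem stmt_1 (ν a b : ℝ) (hν : 0 < ν) (ha : 0 < a) (hab : a < b)
    (ψ : ℝ → ℝ) (hψ : ∀ t > (0:ℝ), ψ t = t ^ ν - t ^ (-ν))
    (f : ℝ → ℝ → ℝ)
    (hf₁ : ∀ s ∈ Icc a b, ∀ t ∈ Icc a b, t ≤ s →
      f s t = ψ (t / a) * ψ (b / s) / ψ (b / a))
    (hf₂ : ∀ s ∈ Icc a b, ∀ t ∈ Icc a b, s < t →
      f s t = ψ (s / a) * ψ (b / t) / ψ (b / a)) :
    (∀ s ∈ Icc a b, ∀ t ∈ Icc a b, f s t ≤ f s s) ∧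
    (∀ s ∈ Icc a b, f s s ≤ f (Real.sqrt (a * b)) (Real.sqrt (a * b))) ∧
    f (Real.sqrt (a * b)) (Real.sqrt (a * b)) = (1 - (a / b) ^ ν) / (1 + (a / b) ^ ν) ∧
    (1 - (a / b) ^ ν) / (1 + (a / b) ^ ν) ≤ 1 := by
  have hb : 0 < b := ha.trans hab
  have hψ' : ∀ t > 0, ψ t = psi ν t := hψ
  have hf : ∀ s ∈ Icc a b, ∀ t ∈ Icc a b, f s t = psiKernel ν a b s t := by
    intro s hs t ht
    have hs₀ : 0 < s := ha.trans_le hs.1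
    have ht₀ : 0 < t := ha.trans_le ht.1
    rw [psiKernel]
    split_ifs with hts
    · rw [hf₁ s hs t ht hts, hψ' _ (div_pos ht₀ ha), hψ' _ (div_pos hb hs₀), hψ' _ (div_pos hb ha)]
    · rw [hf₂ s hs t ht (not_le.1 hts), hψ' _ (div_pos hs₀ ha), hψ' _ (div_pos hb ht₀),
        hψ' _ (div_pos hb ha)]
  have hm := sqrt_mul_mem_Icc ha.le hab.le
  refine ⟨fun s hs t ht => ?_, fun s hs => ?_, ?_, ?_⟩
  · rw [hf s hs t ht, hf s hs s hs]
    exact psiKernel_le_self hν.le ha hs (ha.trans_le ht.1)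
  · rw [hf s hs s hs, hf _ hm _ hm]
    exact psiKernel_self_le_sqrt hν.le ha hab.le (ha.trans_le hs.1)
  · rw [hf _ hm _ hm]
    exact psiKernel_sqrt hν ha hab
  · have hx : 0 ≤ (a / b) ^ ν := rpow_nonneg (div_pos ha hb).le ν
    exact div_le_one_of_le₀ (by linarith) (by linarith)
end

section
/- Let q, u : (c,d) → ℝ be smooth with u'' = q·u, and suppose q depends smoothly on a parameter y with u = u(x,y), q(x,y) = (ν² − 1/4)/x² − y², and u_{xx} = q·u. Then ∂/∂x (u_{xy}·u − u_x·u_y) = −2y·u². Consequently, if u(1,y) = 0 for all y and u(x₀,y₀) = 0 with x₀ > 1, then u_x(x₀,y₀)·u_y(x₀,y₀) = 2y₀·∫₁^{x₀} u(x,y₀)² dx. -/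
open Real Set MeasureTheory

/-- Partial derivative in the first variable. -/
noncomputable def pd1 (u : ℝ → ℝ → ℝ) (x y : ℝ) : ℝ := deriv (fun t => u t y) x

/-- Partial derivative in the second variable. -/
noncomputable def pd2 (u : ℝ → ℝ → ℝ) (x y : ℝ) : ℝ := deriv (fun t => u x t) y

section helpers

variable {v : ℝ → ℝ → ℝ} {s : Set (ℝ × ℝ)} {x y : ℝ}

private lemma ev1 (hs : IsOpen s) (hp : (x, y) ∈ s) : ∀ᶠ t in nhds x, (t, y) ∈ s := by
  have hc : ContinuousAt (fun t : ℝ => (t, y)) x :=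
    (continuous_id.prodMk continuous_const).continuousAt
  exact hc (hs.mem_nhds hp)

private lemma ev2 (hs : IsOpen s) (hp : (x, y) ∈ s) : ∀ᶠ t in nhds y, (x, t) ∈ s := by
  have hc : ContinuousAt (fun t : ℝ => (x, t)) y :=
    (continuous_const.prodMk continuous_id).continuousAt
  exact hc (hs.mem_nhds hp)

lemma hdF1 (hs : IsOpen s) (hv : ContDiffOn ℝ (⊤ : ℕ∞) (fun p : ℝ × ℝ => v p.1 p.2) s)
    (hp : (x, y) ∈ s) :
    HasDerivAt (fun t => v t y)
      (fderiv ℝ (fun p : ℝ × ℝ => v p.1 p.2) (x, y) (1, 0)) x := by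
  have hF := ((hv.contDiffAt (hs.mem_nhds hp)).differentiableAt (by simp)).hasFDerivAt
  have hg : HasDerivAt (fun t : ℝ => (t, y)) ((1:ℝ), (0:ℝ)) x :=
    (hasDerivAt_id x).prodMk (hasDerivAt_const x y)
  exact hF.comp_hasDerivAt x hg

lemma hdF2 (hs : IsOpen s) (hv : ContDiffOn ℝ (⊤ : ℕ∞) (fun p : ℝ × ℝ => v p.1 p.2) s)
    (hp : (x, y) ∈ s) :
    HasDerivAt (fun t => v x t)
      (fderiv ℝ (fun p : ℝ × ℝ => v p.1 p.2) (x, y) (0, 1)) y := by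
  have hF := ((hv.contDiffAt (hs.mem_nhds hp)).differentiableAt (by simp)).hasFDerivAt
  have hg : HasDerivAt (fun t : ℝ => (x, t)) ((0:ℝ), (1:ℝ)) y :=
    (hasDerivAt_const y x).prodMk (hasDerivAt_id y)
  exact hF.comp_hasDerivAt y hg

lemma hd1 (hs : IsOpen s) (hv : ContDiffOn ℝ (⊤ : ℕ∞) (fun p : ℝ × ℝ => v p.1 p.2) s)
    (hp : (x, y) ∈ s) : HasDerivAt (fun t => v t y) (pd1 v x y) x := by
  have h := hdF1 hs hv hp
  have : pd1 v x y = _ := h.deriv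
  rw [pd1, h.deriv]; exact h

lemma hd2 (hs : IsOpen s) (hv : ContDiffOn ℝ (⊤ : ℕ∞) (fun p : ℝ × ℝ => v p.1 p.2) s)
    (hp : (x, y) ∈ s) : HasDerivAt (fun t => v x t) (pd2 v x y) y := by
  have h := hdF2 hs hv hp
  rw [pd2, h.deriv]; exact h

lemma hdG1 (hs : IsOpen s) (hv : ContDiffOn ℝ (⊤ : ℕ∞) (fun p : ℝ × ℝ => v p.1 p.2) s)
    (hp : (x, y) ∈ s) (w : ℝ × ℝ) :
    HasDerivAt (fun t => fderiv ℝ (fun p : ℝ × ℝ => v p.1 p.2) (t, y) w)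
      (fderiv ℝ (fderiv ℝ (fun p : ℝ × ℝ => v p.1 p.2)) (x, y) (1, 0) w) x := by
  have hG := (((hv.fderiv_of_isOpen (m := (⊤ : ℕ∞)) hs (by simp)).contDiffAt
    (hs.mem_nhds hp)).differentiableAt (by simp)).hasFDerivAt
  have hg : HasDerivAt (fun t : ℝ => (t, y)) ((1:ℝ), (0:ℝ)) x :=
    (hasDerivAt_id x).prodMk (hasDerivAt_const x y)
  have h1 := hG.comp_hasDerivAt x hg
  exact (ContinuousLinearMap.apply ℝ ℝ w).hasFDerivAt.comp_hasDerivAt x h1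

lemma hdG2 (hs : IsOpen s) (hv : ContDiffOn ℝ (⊤ : ℕ∞) (fun p : ℝ × ℝ => v p.1 p.2) s)
    (hp : (x, y) ∈ s) (w : ℝ × ℝ) :
    HasDerivAt (fun t => fderiv ℝ (fun p : ℝ × ℝ => v p.1 p.2) (x, t) w)
      (fderiv ℝ (fderiv ℝ (fun p : ℝ × ℝ => v p.1 p.2)) (x, y) (0, 1) w) y := by
  have hG := (((hv.fderiv_of_isOpen (m := (⊤ : ℕ∞)) hs (by simp)).contDiffAt
    (hs.mem_nhds hp)).differentiableAt (by simp)).hasFDerivAt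
  have hg : HasDerivAt (fun t : ℝ => (x, t)) ((0:ℝ), (1:ℝ)) y :=
    (hasDerivAt_const y x).prodMk (hasDerivAt_id y)
  have h1 := hG.comp_hasDerivAt y hg
  exact (ContinuousLinearMap.apply ℝ ℝ w).hasFDerivAt.comp_hasDerivAt y h1

lemma hd_pd1_1 (hs : IsOpen s) (hv : ContDiffOn ℝ (⊤ : ℕ∞) (fun p : ℝ × ℝ => v p.1 p.2) s)
    (hp : (x, y) ∈ s) :
    HasDerivAt (fun t => pd1 v t y) (pd1 (pd1 v) x y) x := by
  have h := (hdG1 hs hv hp (1, 0)).congr_of_eventuallyEq <| by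
    filter_upwards [ev1 hs hp] with t ht
    exact (hdF1 hs hv ht).deriv
  have e : pd1 (pd1 v) x y = _ := h.deriv
  rw [e]; exact h

lemma hd_pd2_1 (hs : IsOpen s) (hv : ContDiffOn ℝ (⊤ : ℕ∞) (fun p : ℝ × ℝ => v p.1 p.2) s)
    (hp : (x, y) ∈ s) :
    HasDerivAt (fun t => pd2 v t y) (pd1 (pd2 v) x y) x := by
  have h := (hdG1 hs hv hp (0, 1)).congr_of_eventuallyEq <| by
    filter_upwards [ev1 hs hp] with t ht
    exact (hdF2 hs hv ht).deriv
  have e : pd1 (pd2 v) x y = _ := h.deriv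
  rw [e]; exact h

lemma hd_pd1_2 (hs : IsOpen s) (hv : ContDiffOn ℝ (⊤ : ℕ∞) (fun p : ℝ × ℝ => v p.1 p.2) s)
    (hp : (x, y) ∈ s) :
    HasDerivAt (fun t => pd1 v x t) (pd2 (pd1 v) x y) y := by
  have h := (hdG2 hs hv hp (1, 0)).congr_of_eventuallyEq <| by
    filter_upwards [ev2 hs hp] with t ht
    exact (hdF1 hs hv ht).deriv
  have e : pd2 (pd1 v) x y = _ := h.deriv
  rw [e]; exact h

lemma mixed_eq (hs : IsOpen s) (hv : ContDiffOn ℝ (⊤ : ℕ∞) (fun p : ℝ × ℝ => v p.1 p.2) s)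
    (hp : (x, y) ∈ s) : pd1 (pd2 v) x y = pd2 (pd1 v) x y := by
  have h1 := hd_pd2_1 hs hv hp
  have h2 := hd_pd1_2 hs hv hp
  have e1 : pd1 (pd2 v) x y
      = fderiv ℝ (fderiv ℝ (fun p : ℝ × ℝ => v p.1 p.2)) (x, y) (1, 0) (0, 1) := by
    have h := (hdG1 hs hv hp (0, 1)).congr_of_eventuallyEq <| by
      filter_upwards [ev1 hs hp] with t ht
      exact (hdF2 hs hv ht).deriv
    exact h.deriv
  have e2 : pd2 (pd1 v) x y
      = fderiv ℝ (fderiv ℝ (fun p : ℝ × ℝ => v p.1 p.2)) (x, y) (0, 1) (1, 0) := by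
    have h := (hdG2 hs hv hp (1, 0)).congr_of_eventuallyEq <| by
      filter_upwards [ev2 hs hp] with t ht
      exact (hdF1 hs hv ht).deriv
    exact h.deriv
  rw [e1, e2]
  apply second_derivative_symmetric_of_eventually
  · filter_upwards [hs.mem_nhds hp] with q hq
    exact ((hv.contDiffAt (hs.mem_nhds hq)).differentiableAt (by simp)).hasFDerivAt
  · exact (((hv.fderiv_of_isOpen (m := (⊤ : ℕ∞)) hs (by simp)).contDiffAt
      (hs.mem_nhds hp)).differentiableAt (by simp)).hasFDerivAt

lemma contDiffOn_pd1 (hs : IsOpen s) (hv : ContDiffOn ℝ (⊤ : ℕ∞) (fun p : ℝ × ℝ => v p.1 p.2) s) :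
    ContDiffOn ℝ (⊤ : ℕ∞) (fun p : ℝ × ℝ => pd1 v p.1 p.2) s := by
  apply ContDiffOn.congr ((hv.fderiv_of_isOpen hs (by simp)).clm_apply contDiffOn_const
    (g := fun _ => ((1:ℝ), (0:ℝ))))
  intro p hp
  obtain ⟨a, b⟩ := p
  exact (hdF1 hs hv hp).deriv

end helpers

theorem stmt_4 (ν : ℝ) (hν : 0 ≤ ν) (u : ℝ → ℝ → ℝ)
    (hsmooth : ContDiffOn ℝ (⊤ : ℕ∞) (fun p : ℝ × ℝ => u p.1 p.2) (Ioi 0 ×ˢ Ioi 0))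
    (hode : ∀ x > (0:ℝ), ∀ y > (0:ℝ),
      pd1 (pd1 u) x y = ((ν ^ 2 - 1 / 4) / x ^ 2 - y ^ 2) * u x y)
    (hbc : ∀ y > (0:ℝ), u 1 y = 0) :
    (∀ x > (0:ℝ), ∀ y > (0:ℝ),
      deriv (fun x' => pd1 (pd2 u) x' y * u x' y - pd1 u x' y * pd2 u x' y) x
        = -2 * y * (u x y) ^ 2) ∧
    (∀ x₀ > (1:ℝ), ∀ y₀ > (0:ℝ), u x₀ y₀ = 0 →
      pd1 u x₀ y₀ * pd2 u x₀ y₀ = 2 * y₀ * ∫ x in (1:ℝ)..x₀, (u x y₀) ^ 2) := by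
  have hs : IsOpen (Ioi (0:ℝ) ×ˢ Ioi (0:ℝ)) := isOpen_Ioi.prod isOpen_Ioi
  have hφ := contDiffOn_pd1 hs hsmooth
  have hW : ∀ x > (0:ℝ), ∀ y > (0:ℝ),
      HasDerivAt (fun x' => pd1 (pd2 u) x' y * u x' y - pd1 u x' y * pd2 u x' y)
        (-2 * y * (u x y) ^ 2) x := by
    intro x hx y hy
    have hp : (x, y) ∈ Ioi (0:ℝ) ×ˢ Ioi (0:ℝ) := ⟨hx, hy⟩
    have h1 : HasDerivAt (fun x' => u x' y) (pd1 u x y) x := hd1 hs hsmooth hp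
    have h2 : HasDerivAt (fun x' => pd2 u x' y) (pd1 (pd2 u) x y) x := hd_pd2_1 hs hsmooth hp
    have h3 : HasDerivAt (fun x' => pd1 u x' y) (pd1 (pd1 u) x y) x := hd_pd1_1 hs hsmooth hp
    have hA : HasDerivAt (fun x' => pd1 (pd2 u) x' y) (pd2 (pd1 (pd1 u)) x y) x := by
      have h := (hd_pd2_1 hs hφ hp).congr_of_eventuallyEq <| by
        filter_upwards [ev1 hs hp] with t ht
        exact mixed_eq hs hsmooth ht
      rwa [mixed_eq (v := pd1 u) hs hφ hp] at h
    -- compute pd2 (pd1 (pd1 u)) x y via the ODE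
    have hq : HasDerivAt (fun t => ((ν ^ 2 - 1/4) / x ^ 2 - t ^ 2) * u x t)
        ((0 - 2 * y ^ 1) * u x y + ((ν ^ 2 - 1/4) / x ^ 2 - y ^ 2) * pd2 u x y) y :=
      ((hasDerivAt_const y ((ν ^ 2 - 1/4) / x ^ 2)).sub (hasDerivAt_pow 2 y)).mul
        (hd2 hs hsmooth hp)
    have hq' := hq.congr_of_eventuallyEq (f₁ := fun t => pd1 (pd1 u) x t) <| by
      filter_upwards [eventually_gt_nhds hy] with t ht
      exact hode x hx t ht
    have e_q : pd2 (pd1 (pd1 u)) x y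
        = (0 - 2 * y ^ 1) * u x y + ((ν ^ 2 - 1/4) / x ^ 2 - y ^ 2) * pd2 u x y := hq'.deriv
    rw [e_q] at hA
    have hmain := (hA.mul h1).sub (h3.mul h2)
    refine hmain.congr_deriv ?_
    rw [hode x hx y hy]
    ring
  refine ⟨fun x hx y hy => (hW x hx y hy).deriv, ?_⟩
  intro x₀ hx₀ y₀ hy₀ hu0
  set W : ℝ → ℝ := fun x' => pd1 (pd2 u) x' y₀ * u x' y₀ - pd1 u x' y₀ * pd2 u x' y₀ with hWdef
  have h1x : (1:ℝ) ≤ x₀ := le_of_lt hx₀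
  have hderiv : ∀ x ∈ uIcc (1:ℝ) x₀, HasDerivAt W (-2 * y₀ * (u x y₀) ^ 2) x := by
    intro x hx
    rw [uIcc_of_le h1x] at hx
    exact hW x (lt_of_lt_of_le one_pos hx.1) y₀ hy₀
  have hcontu : ContinuousOn (fun x => u x y₀) (uIcc (1:ℝ) x₀) := by
    have hmaps : MapsTo (fun x : ℝ => ((x, y₀) : ℝ × ℝ)) (uIcc (1:ℝ) x₀)
        (Ioi (0:ℝ) ×ˢ Ioi (0:ℝ)) := by
      intro x hx
      rw [uIcc_of_le h1x] at hx
      exact ⟨lt_of_lt_of_le one_pos hx.1, hy₀⟩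
    exact hsmooth.continuousOn.comp
      ((continuous_id.prodMk continuous_const).continuousOn) hmaps
  have hcont : ContinuousOn (fun x => -2 * y₀ * (u x y₀) ^ 2) (uIcc (1:ℝ) x₀) :=
    continuousOn_const.mul (hcontu.pow 2)
  have hFTC := intervalIntegral.integral_eq_sub_of_hasDerivAt hderiv
    (hcont.intervalIntegrable)
  have hW1 : W 1 = 0 := by
    have hu1 : u 1 y₀ = 0 := hbc y₀ hy₀
    have hpd2 : pd2 u 1 y₀ = 0 := by
      have hev : (fun t => u 1 t) =ᶠ[nhds y₀] fun _ => (0:ℝ) := by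
        filter_upwards [eventually_gt_nhds hy₀] with t ht
        exact hbc t ht
      rw [pd2, hev.deriv_eq, deriv_const]
    simp [hWdef, hu1, hpd2]
  have hWx : W x₀ = -(pd1 u x₀ y₀ * pd2 u x₀ y₀) := by simp [hWdef, hu0]
  have hInt : ∫ x in (1:ℝ)..x₀, -2 * y₀ * (u x y₀) ^ 2
      = -2 * y₀ * ∫ x in (1:ℝ)..x₀, (u x y₀) ^ 2 := by
    exact intervalIntegral.integral_const_mul _ _
  rw [hInt, hW1, hWx] at hFTC
  linarith [hFTC]
end

section
/- Let u : (0,∞)×(0,∞) → ℝ be smooth with u_{xx} = q·u where q(x,y) = (ν²−1/4)/x² − y², u(1,y) = 0 and u_x(1,y) = 2/π for all y > 0. Define f(x) = 2y²∫₁ˣ u(t,y)² dt + x·q(x,y)·u(x,y)² − x·u_x(x,y)² + u_x(x,y)·u(x,y) for fixed y. Then f is constant in x, equal to −4/π². -/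
open Real Set MeasureTheory

theorem stmt_5 (ν : ℝ) (hν : 0 ≤ ν) (y : ℝ) (hy : 0 < y) (u : ℝ → ℝ → ℝ)
    (hsmooth : ContDiffOn ℝ (⊤ : ℕ∞) (fun p : ℝ × ℝ => u p.1 p.2) (Ioi 0 ×ˢ Ioi 0))
    (hode : ∀ x > (0:ℝ), ∀ y' > (0:ℝ),
      pd1 (pd1 u) x y' = ((ν ^ 2 - 1 / 4) / x ^ 2 - y' ^ 2) * u x y')
    (hbc : ∀ y' > (0:ℝ), u 1 y' = 0)
    (hbc' : ∀ y' > (0:ℝ), pd1 u 1 y' = 2 / Real.pi) :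
    ∀ x > (0:ℝ),
      2 * y ^ 2 * (∫ t in (1:ℝ)..x, (u t y) ^ 2)
        + x * ((ν ^ 2 - 1 / 4) / x ^ 2 - y ^ 2) * (u x y) ^ 2
        - x * (pd1 u x y) ^ 2 + pd1 u x y * u x y
      = -4 / Real.pi ^ 2 := by
  set c := ν ^ 2 - 1 / 4 with hc
  set v : ℝ → ℝ := fun t => u t y with hvdef
  have hopen : IsOpen (Ioi (0:ℝ)) := isOpen_Ioi
  -- v is smooth on Ioi 0
  have hv : ContDiffOn ℝ (⊤ : ℕ∞) v (Ioi 0) := by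
    have hg : ContDiff ℝ (⊤ : ℕ∞) (fun t : ℝ => (t, y)) := contDiff_id.prodMk contDiff_const
    exact hsmooth.comp hg.contDiffOn (fun t ht => ⟨ht, hy⟩)
  have hw : ContDiffOn ℝ (⊤ : ℕ∞) (deriv v) (Ioi 0) := by
    exact hv.deriv_of_isOpen hopen (by simp)
  -- key derivative facts
  have hvd : ∀ z ∈ Ioi (0:ℝ), HasDerivAt v (deriv v z) z := by
    intro z hz
    exact ((hv.contDiffAt (hopen.mem_nhds hz)).differentiableAt (by simp)).hasDerivAt
  have hwd : ∀ z ∈ Ioi (0:ℝ), HasDerivAt (deriv v) ((c / z ^ 2 - y ^ 2) * v z) z := by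
    intro z hz
    have h1 : HasDerivAt (deriv v) (deriv (deriv v) z) z :=
      ((hw.contDiffAt (hopen.mem_nhds hz)).differentiableAt (by simp)).hasDerivAt
    have h2 : deriv (deriv v) z = (c / z ^ 2 - y ^ 2) * v z := hode z hz y hy
    rwa [h2] at h1
  have hcont2 : ContinuousOn (fun t => v t ^ 2) (Ioi 0) := (hv.continuousOn).pow 2
  -- derivative of the integral term
  have hI : ∀ z ∈ Ioi (0:ℝ), HasDerivAt (fun s => ∫ t in (1:ℝ)..s, v t ^ 2) (v z ^ 2) z := by
    intro z hz
    have hsub : uIcc (1:ℝ) z ⊆ Ioi 0 := by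
      intro t ht
      exact lt_of_lt_of_le (lt_min one_pos hz) ht.1
    have hint : IntervalIntegrable (fun t => v t ^ 2) volume 1 z :=
      (hcont2.mono hsub).intervalIntegrable
    exact intervalIntegral.integral_hasDerivAt_right hint
      ((hcont2.stronglyMeasurableAtFilter hopen) z hz)
      ((hcont2.continuousAt (hopen.mem_nhds hz)))
  -- F and its derivative
  set F : ℝ → ℝ := fun t => 2 * y ^ 2 * (∫ s in (1:ℝ)..t, v s ^ 2)
      + t * (c / t ^ 2 - y ^ 2) * v t ^ 2 - t * (deriv v t) ^ 2 + deriv v t * v t with hF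
  have hFd : ∀ z ∈ Ioi (0:ℝ), HasDerivAt F 0 z := by
    intro z hz
    have hz0 : (z:ℝ) ≠ 0 := ne_of_gt hz
    have hq : HasDerivAt (fun t : ℝ => c / t ^ 2 - y ^ 2)
        ((0 * z ^ 2 - c * (2 * z ^ 1)) / (z ^ 2) ^ 2 - 0) z :=
      (((hasDerivAt_const z c).div (hasDerivAt_pow 2 z) (pow_ne_zero 2 hz0))).sub
        (hasDerivAt_const z (y ^ 2))
    have hD : HasDerivAt F
        (2 * y ^ 2 * (v z ^ 2)
          + ((1 * (c / z ^ 2 - y ^ 2) + z * ((0 * z ^ 2 - c * (2 * z ^ 1)) / (z ^ 2) ^ 2 - 0)) * v z ^ 2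
             + z * (c / z ^ 2 - y ^ 2) * (2 * v z ^ 1 * deriv v z))
          - (1 * (deriv v z) ^ 2 + z * (2 * deriv v z ^ 1 * ((c / z ^ 2 - y ^ 2) * v z)))
          + (((c / z ^ 2 - y ^ 2) * v z) * v z + deriv v z * deriv v z)) z := by
      exact ((((hI z hz).const_mul (2 * y ^ 2)).add
        ((((hasDerivAt_id z).mul hq).mul ((hvd z hz).pow 2)))).sub
        (((hasDerivAt_id z).mul ((hwd z hz).pow 2)))).add
        ((hwd z hz).mul (hvd z hz))
    have : (2 * y ^ 2 * (v z ^ 2)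
          + ((1 * (c / z ^ 2 - y ^ 2) + z * ((0 * z ^ 2 - c * (2 * z ^ 1)) / (z ^ 2) ^ 2 - 0)) * v z ^ 2
             + z * (c / z ^ 2 - y ^ 2) * (2 * v z ^ 1 * deriv v z))
          - (1 * (deriv v z) ^ 2 + z * (2 * deriv v z ^ 1 * ((c / z ^ 2 - y ^ 2) * v z)))
          + (((c / z ^ 2 - y ^ 2) * v z) * v z + deriv v z * deriv v z)) = 0 := by
      field_simp
      ring
    rwa [this] at hD
  -- F is constant on Ioi 0
  have hconst : ∀ z ∈ Ioi (0:ℝ), F z = F 1 := by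
    intro z hz
    have hdiff : DifferentiableOn ℝ F (Ioi 0) :=
      fun t ht => ((hFd t ht).differentiableAt).differentiableWithinAt
    refine (convex_Ioi (0:ℝ)).is_const_of_fderivWithin_eq_zero hdiff ?_ hz (mem_Ioi.2 one_pos)
    intro t ht
    rw [fderivWithin_of_isOpen hopen ht, (hFd t ht).hasFDerivAt.fderiv]
    ext
    simp
  -- compute F 1
  have hF1 : F 1 = -4 / Real.pi ^ 2 := by
    have h1 : v 1 = 0 := hbc y hy
    have h2 : deriv v 1 = 2 / Real.pi := hbc' y hy
    have hpi : Real.pi ≠ 0 := Real.pi_ne_zero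
    simp only [hF, intervalIntegral.integral_same, h1, h2]
    field_simp
    ring
  intro x hx
  have hgoal : F x = -4 / Real.pi ^ 2 := (hconst x hx).trans hF1
  simpa only [hF, hvdef, pd1] using hgoal
end

section
/- Under the hypotheses of the previous context, if u(x₀,y₀) = 0 with x₀ > 1, then 2y₀²·∫₁^{x₀} u(t,y₀)² dt < x₀·(u_x(x₀,y₀))², and consequently u_x(x₀,y₀)/u_y(x₀,y₀) > y₀/x₀. -/
open Real Set MeasureTheory

theorem stmt_6 (ν : ℝ) (hν : 0 ≤ ν) (u : ℝ → ℝ → ℝ)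
    (hsmooth : ContDiffOn ℝ (⊤ : ℕ∞) (fun p : ℝ × ℝ => u p.1 p.2) (Ioi 0 ×ˢ Ioi 0))
    (hode : ∀ x > (0:ℝ), ∀ y > (0:ℝ),
      pd1 (pd1 u) x y = ((ν ^ 2 - 1 / 4) / x ^ 2 - y ^ 2) * u x y)
    (hbc : ∀ y > (0:ℝ), u 1 y = 0)
    (hbc' : ∀ y > (0:ℝ), pd1 u 1 y = 2 / Real.pi)
    (x₀ y₀ : ℝ) (hx₀ : 1 < x₀) (hy₀ : 0 < y₀) (hzero : u x₀ y₀ = 0)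
    (hid : pd1 u x₀ y₀ * pd2 u x₀ y₀ = 2 * y₀ * ∫ x in (1:ℝ)..x₀, (u x y₀) ^ 2)
    (hpos : 0 < 2 * y₀ * ∫ x in (1:ℝ)..x₀, (u x y₀) ^ 2) :
    2 * y₀ ^ 2 * (∫ t in (1:ℝ)..x₀, (u t y₀) ^ 2) < x₀ * (pd1 u x₀ y₀) ^ 2 ∧
    pd1 u x₀ y₀ / pd2 u x₀ y₀ > y₀ / x₀ := by
  have hπ : (0:ℝ) < Real.pi := Real.pi_pos
  set c : ℝ := ν ^ 2 - 1 / 4 with hc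
  set f : ℝ → ℝ := fun x => u x y₀ with hf
  set g : ℝ → ℝ := fun x => pd1 u x y₀ with hg
  -- smoothness of f on Ioi 0
  have hfc : ContDiffOn ℝ (⊤ : ℕ∞) f (Ioi 0) := by
    have : ContDiff ℝ (⊤ : ℕ∞) (fun x : ℝ => (x, y₀)) := contDiff_id.prodMk contDiff_const
    exact hsmooth.comp this.contDiffOn (fun x hx => ⟨hx, hy₀⟩)
  have hgdef : g = deriv f := rfl
  have hgc : ContDiffOn ℝ (⊤ : ℕ∞) g (Ioi 0) := by
    rw [hgdef]; exact hfc.deriv_of_isOpen isOpen_Ioi (by simp)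
  have hf' : ∀ x ∈ Ioi (0:ℝ), HasDerivAt f (g x) x := by
    intro x hx
    have := (hfc.differentiableOn (by simp)).differentiableAt
      (isOpen_Ioi.mem_nhds hx)
    exact this.hasDerivAt
  have hg' : ∀ x ∈ Ioi (0:ℝ), HasDerivAt g ((c / x ^ 2 - y₀ ^ 2) * f x) x := by
    intro x hx
    have hd := ((hgc.differentiableOn (by simp)).differentiableAt
      (isOpen_Ioi.mem_nhds hx)).hasDerivAt
    have : deriv g x = (c / x ^ 2 - y₀ ^ 2) * f x := hode x hx y₀ hy₀
    rwa [this] at hd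
  -- the antiderivative
  set V : ℝ → ℝ := fun x => x * g x ^ 2 + (y₀ ^ 2 * x - c / x) * f x ^ 2 - f x * g x with hV
  have hVderiv : ∀ x ∈ uIcc (1:ℝ) x₀, HasDerivAt V (2 * y₀ ^ 2 * f x ^ 2) x := by
    intro x hx
    rw [uIcc_of_le hx₀.le] at hx
    have hx0 : 0 < x := lt_of_lt_of_le zero_lt_one hx.1
    have hxm : x ∈ Ioi (0:ℝ) := hx0
    have hfx := hf' x hxm
    have hgx := hg' x hxm
    have h1 : HasDerivAt (fun x => x * g x ^ 2)
        (1 * g x ^ 2 + x * (2 * g x ^ 1 * ((c / x ^ 2 - y₀ ^ 2) * f x))) x :=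
      (hasDerivAt_id x).mul (hgx.pow 2)
    have h2a : HasDerivAt (fun x : ℝ => y₀ ^ 2 * x - c / x)
        (y₀ ^ 2 * 1 - c * (-(x ^ 2)⁻¹)) x := by
      have := ((hasDerivAt_inv hx0.ne').const_mul c)
      simpa [div_eq_mul_inv] using ((hasDerivAt_id x).const_mul (y₀ ^ 2)).fun_sub this
    have h2 : HasDerivAt (fun x => (y₀ ^ 2 * x - c / x) * f x ^ 2)
        ((y₀ ^ 2 * 1 - c * (-(x ^ 2)⁻¹)) * f x ^ 2 +
          (y₀ ^ 2 * x - c / x) * (2 * f x ^ 1 * g x)) x :=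
      h2a.mul (hfx.pow 2)
    have h3 : HasDerivAt (fun x => f x * g x)
        (g x * g x + f x * ((c / x ^ 2 - y₀ ^ 2) * f x)) x := hfx.mul hgx
    have := (h1.fun_add h2).fun_sub h3
    convert this using 1
    · rfl
    · rfl
    field_simp
    ring
  have hfcont : ContinuousOn (fun x => 2 * y₀ ^ 2 * f x ^ 2) (uIcc (1:ℝ) x₀) := by
    apply ContinuousOn.mul continuousOn_const
    apply ContinuousOn.pow
    apply (hfc.continuousOn).mono
    rw [uIcc_of_le hx₀.le]
    intro x hx; exact lt_of_lt_of_le zero_lt_one hx.1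
  have hint : IntervalIntegrable (fun x => 2 * y₀ ^ 2 * f x ^ 2) volume 1 x₀ :=
    hfcont.intervalIntegrable
  have hFTC : ∫ x in (1:ℝ)..x₀, 2 * y₀ ^ 2 * f x ^ 2 = V x₀ - V 1 :=
    intervalIntegral.integral_eq_sub_of_hasDerivAt hVderiv hint
  have hf1 : f 1 = 0 := hbc y₀ hy₀
  have hfx0 : f x₀ = 0 := hzero
  have hg1 : g 1 = 2 / Real.pi := hbc' y₀ hy₀
  have hVx0 : V x₀ = x₀ * g x₀ ^ 2 := by simp [hV, hfx0]
  have hV1 : V 1 = (2 / Real.pi) ^ 2 := by simp [hV, hf1, hg1]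
  have hpull : ∫ x in (1:ℝ)..x₀, 2 * y₀ ^ 2 * f x ^ 2
      = 2 * y₀ ^ 2 * ∫ x in (1:ℝ)..x₀, f x ^ 2 :=
    intervalIntegral.integral_const_mul _ _
  have hkey : 2 * y₀ ^ 2 * (∫ x in (1:ℝ)..x₀, f x ^ 2)
      = x₀ * g x₀ ^ 2 - (2 / Real.pi) ^ 2 := by
    rw [← hpull, hFTC, hVx0, hV1]
  have hπ2 : (0:ℝ) < (2 / Real.pi) ^ 2 := by positivity
  have hfirst : 2 * y₀ ^ 2 * (∫ t in (1:ℝ)..x₀, (u t y₀) ^ 2) < x₀ * (pd1 u x₀ y₀) ^ 2 := by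
    have : 2 * y₀ ^ 2 * (∫ x in (1:ℝ)..x₀, f x ^ 2) < x₀ * g x₀ ^ 2 := by
      rw [hkey]; linarith
    simpa [hf, hg] using this
  refine ⟨hfirst, ?_⟩
  set A := pd1 u x₀ y₀
  set B := pd2 u x₀ y₀
  set I := ∫ t in (1:ℝ)..x₀, (u t y₀) ^ 2 with hI
  have hABpos : 0 < A * B := hid ▸ hpos
  have hA : A ≠ 0 := fun h => by simp [h] at hABpos
  have hAB : A * B = 2 * y₀ * I := hid
  have hx0pos : (0:ℝ) < x₀ := lt_trans zero_lt_one hx₀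
  have hB : B ≠ 0 := fun h => by simp [h] at hABpos
  have hquot : A / B = A ^ 2 / (2 * y₀ * I) := by
    rw [← hAB]; field_simp
  rw [gt_iff_lt, hquot, div_lt_div_iff₀ hx0pos (hAB ▸ hABpos)]
  nlinarith [hfirst]
end

section
/- Let u : (0,∞)×(0,∞) → ℝ be smooth with u_{xx} = q·u where q(x,y) = (ν²−1/4)/x² − y², u(1,y) = 0 and u_x(1,y) = 2/π for all y > 0, and let w = x·u_x − y·u_y. Then u·w_x − u_x·w ≡ −4/π² on (0,∞)×(0,∞). In particular, if u(x₀,y₀) = 0, then u_x(x₀,y₀)·(x₀·u_x(x₀,y₀) − y₀·u_y(x₀,y₀)) = 4/π². -/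
open Real Set Filter Topology

private lemma slice1 {F : ℝ × ℝ → ℝ} {x y : ℝ} (h : DifferentiableAt ℝ F (x, y)) :
    HasDerivAt (fun t => F (t, y)) (fderiv ℝ F (x, y) (1, 0)) x := by
  have h1 : HasDerivAt (fun t : ℝ => (t, y)) ((1:ℝ), (0:ℝ)) x :=
    (hasDerivAt_id x).prodMk (hasDerivAt_const x y)
  exact h.hasFDerivAt.comp_hasDerivAt x h1

private lemma slice2 {F : ℝ × ℝ → ℝ} {x y : ℝ} (h : DifferentiableAt ℝ F (x, y)) :
    HasDerivAt (fun t => F (x, t)) (fderiv ℝ F (x, y) (0, 1)) y := by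
  have h1 : HasDerivAt (fun t : ℝ => (x, t)) ((0:ℝ), (1:ℝ)) y :=
    (hasDerivAt_const y x).prodMk (hasDerivAt_id y)
  exact h.hasFDerivAt.comp_hasDerivAt y h1

private lemma fderiv_dir_eq {F : ℝ × ℝ → ℝ} {p : ℝ × ℝ}
    (hd : DifferentiableAt ℝ (fderiv ℝ F) p) (v w : ℝ × ℝ) :
    fderiv ℝ (fun q => fderiv ℝ F q v) p w = fderiv ℝ (fderiv ℝ F) p w v := by
  have h := (ContinuousLinearMap.apply ℝ ℝ v).hasFDerivAt.comp p hd.hasFDerivAt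
  rw [show (fun q => fderiv ℝ F q v) = (ContinuousLinearMap.apply ℝ ℝ v) ∘ (fderiv ℝ F) from rfl,
    h.fderiv]
  rfl

private lemma fderiv_apply_comm {F : ℝ × ℝ → ℝ} {p : ℝ × ℝ} {s : Set (ℝ × ℝ)}
    (hs : IsOpen s) (hp : p ∈ s) (hF : ContDiffOn ℝ (⊤ : ℕ∞) F s) (v w : ℝ × ℝ) :
    fderiv ℝ (fun q => fderiv ℝ F q v) p w = fderiv ℝ (fun q => fderiv ℝ F q w) p v := by
  have hat : ContDiffAt ℝ (⊤ : ℕ∞) F p := hF.contDiffAt (hs.mem_nhds hp)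
  have hsym : IsSymmSndFDerivAt ℝ F p := hat.isSymmSndFDerivAt (by rw [minSmoothness_of_isRCLikeNormedField]; exact WithTop.coe_le_coe.2 le_top)
  have hdF : ContDiffOn ℝ (⊤ : ℕ∞) (fderiv ℝ F) s :=
    ((contDiffOn_infty_iff_fderiv_of_isOpen hs).1 hF).2
  have hd : DifferentiableAt ℝ (fderiv ℝ F) p :=
    (hdF.differentiableOn (by simp)).differentiableAt (hs.mem_nhds hp)
  rw [fderiv_dir_eq hd v w, fderiv_dir_eq hd w v]
  exact hsym.eq w v

private noncomputable def UU (u : ℝ → ℝ → ℝ) : ℝ × ℝ → ℝ := fun p => u p.1 p.2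
private noncomputable def AA (u : ℝ → ℝ → ℝ) : ℝ × ℝ → ℝ := fun p => fderiv ℝ (UU u) p (1, 0)
private noncomputable def BB (u : ℝ → ℝ → ℝ) : ℝ × ℝ → ℝ := fun p => fderiv ℝ (UU u) p (0, 1)
private noncomputable def AA1 (u : ℝ → ℝ → ℝ) : ℝ × ℝ → ℝ := fun p => fderiv ℝ (AA u) p (1, 0)
private noncomputable def AA2 (u : ℝ → ℝ → ℝ) : ℝ × ℝ → ℝ := fun p => fderiv ℝ (AA u) p (0, 1)

theorem stmt_8 (ν : ℝ) (hν : 0 ≤ ν) (u : ℝ → ℝ → ℝ)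
    (hsmooth : ContDiffOn ℝ (⊤ : ℕ∞) (fun p : ℝ × ℝ => u p.1 p.2) (Ioi 0 ×ˢ Ioi 0))
    (hode : ∀ x > (0:ℝ), ∀ y > (0:ℝ),
      pd1 (pd1 u) x y = ((ν ^ 2 - 1 / 4) / x ^ 2 - y ^ 2) * u x y)
    (hbc : ∀ y > (0:ℝ), u 1 y = 0)
    (hbc' : ∀ y > (0:ℝ), pd1 u 1 y = 2 / Real.pi)
    (w : ℝ → ℝ → ℝ) (hw : ∀ x y : ℝ, w x y = x * pd1 u x y - y * pd2 u x y) :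
    (∀ x > (0:ℝ), ∀ y > (0:ℝ),
      u x y * pd1 w x y - pd1 u x y * w x y = -4 / Real.pi ^ 2) ∧
    (∀ x₀ > (0:ℝ), ∀ y₀ > (0:ℝ), u x₀ y₀ = 0 →
      pd1 u x₀ y₀ * (x₀ * pd1 u x₀ y₀ - y₀ * pd2 u x₀ y₀) = 4 / Real.pi ^ 2) := by
  have hπ : Real.pi ≠ 0 := Real.pi_ne_zero
  have hSopen : IsOpen (Ioi (0:ℝ) ×ˢ Ioi (0:ℝ)) := isOpen_Ioi.prod isOpen_Ioi
  have hmem : ∀ {x y : ℝ}, 0 < x → 0 < y → (x, y) ∈ Ioi (0:ℝ) ×ˢ Ioi (0:ℝ) :=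
    fun hx hy => ⟨hx, hy⟩
  have hU : ContDiffOn ℝ (⊤ : ℕ∞) (UU u) (Ioi 0 ×ˢ Ioi 0) := hsmooth.of_le (by simp)
  have hdU : ContDiffOn ℝ (⊤ : ℕ∞) (fderiv ℝ (UU u)) (Ioi 0 ×ˢ Ioi 0) :=
    ((contDiffOn_infty_iff_fderiv_of_isOpen hSopen).1 hU).2
  have hA : ContDiffOn ℝ (⊤ : ℕ∞) (AA u) (Ioi 0 ×ˢ Ioi 0) := hdU.clm_apply contDiffOn_const
  have hB : ContDiffOn ℝ (⊤ : ℕ∞) (BB u) (Ioi 0 ×ˢ Ioi 0) := hdU.clm_apply contDiffOn_const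
  have hdA : ContDiffOn ℝ (⊤ : ℕ∞) (fderiv ℝ (AA u)) (Ioi 0 ×ˢ Ioi 0) :=
    ((contDiffOn_infty_iff_fderiv_of_isOpen hSopen).1 hA).2
  have hA1 : ContDiffOn ℝ (⊤ : ℕ∞) (AA1 u) (Ioi 0 ×ˢ Ioi 0) := hdA.clm_apply contDiffOn_const
  have hA2 : ContDiffOn ℝ (⊤ : ℕ∞) (AA2 u) (Ioi 0 ×ˢ Ioi 0) := hdA.clm_apply contDiffOn_const
  have hdiffAt : ∀ (F : ℝ × ℝ → ℝ), ContDiffOn ℝ (⊤ : ℕ∞) F (Ioi 0 ×ˢ Ioi 0) →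
      ∀ {p : ℝ × ℝ}, p ∈ Ioi (0:ℝ) ×ˢ Ioi (0:ℝ) → DifferentiableAt ℝ F p :=
    fun F hF p hp =>
      (hF.differentiableOn (by simp)).differentiableAt (hSopen.mem_nhds hp)
  -- slices of U
  have hUs1 : ∀ {x y : ℝ}, 0 < x → 0 < y →
      HasDerivAt (fun t => u t y) (AA u (x, y)) x :=
    fun {x y} hx hy => slice1 (hdiffAt _ hU (hmem hx hy))
  have hUs2 : ∀ {x y : ℝ}, 0 < x → 0 < y →
      HasDerivAt (fun t => u x t) (BB u (x, y)) y :=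
    fun {x y} hx hy => slice2 (hdiffAt _ hU (hmem hx hy))
  have hpd1A : ∀ {x y : ℝ}, 0 < x → 0 < y → pd1 u x y = AA u (x, y) :=
    fun {x y} hx hy => (hUs1 hx hy).deriv
  have hpd2B : ∀ {x y : ℝ}, 0 < x → 0 < y → pd2 u x y = BB u (x, y) :=
    fun {x y} hx hy => (hUs2 hx hy).deriv
  -- second derivative in x
  have hA1eq : ∀ {x y : ℝ}, 0 < x → 0 < y →
      AA1 u (x, y) = ((ν ^ 2 - 1 / 4) / x ^ 2 - y ^ 2) * u x y := by
    intro x y hx hy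
    rw [← hode x hx y hy]
    have hev : (fun t => pd1 u t y) =ᶠ[𝓝 x] (fun t => AA u (t, y)) := by
      filter_upwards [isOpen_Ioi.eventually_mem hx] with t ht
      exact hpd1A ht hy
    have h2 : deriv (fun t => AA u (t, y)) x = AA1 u (x, y) :=
      (slice1 (hdiffAt _ hA (hmem hx hy))).deriv
    rw [show pd1 (pd1 u) x y = deriv (fun t => pd1 u t y) x from rfl, hev.deriv_eq, h2]
  -- symmetry swaps
  have hswap1 : ∀ {x y : ℝ}, 0 < x → 0 < y →
      fderiv ℝ (BB u) (x, y) (1, 0) = AA2 u (x, y) := by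
    intro x y hx hy
    exact fderiv_apply_comm hSopen (hmem hx hy) hU (0, 1) (1, 0)
  have hswap2 : ∀ {x y : ℝ}, 0 < x → 0 < y →
      fderiv ℝ (AA2 u) (x, y) (1, 0) = fderiv ℝ (AA1 u) (x, y) (0, 1) := by
    intro x y hx hy
    exact fderiv_apply_comm hSopen (hmem hx hy) hA (0, 1) (1, 0)
  -- derivative of AA1 slice in x
  have hA1x : ∀ {x y : ℝ}, 0 < x → 0 < y →
      HasDerivAt (fun t => AA1 u (t, y))
        ((0 * x ^ 2 - (ν ^ 2 - 1 / 4) * (2 * x ^ 1)) / (x ^ 2) ^ 2 * u x y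
          + ((ν ^ 2 - 1 / 4) / x ^ 2 - y ^ 2) * AA u (x, y)) x := by
    intro x y hx hy
    have hq : HasDerivAt (fun t : ℝ => (ν ^ 2 - 1 / 4) / t ^ 2 - y ^ 2)
        ((0 * x ^ 2 - (ν ^ 2 - 1 / 4) * (2 * x ^ 1)) / (x ^ 2) ^ 2) x :=
      (((hasDerivAt_const x (ν ^ 2 - 1 / 4)).div (hasDerivAt_pow 2 x)
        (by positivity))).sub_const (y ^ 2)
    have hmul := hq.mul (hUs1 hx hy)
    have hev : (fun t => ((ν ^ 2 - 1 / 4) / t ^ 2 - y ^ 2) * u t y) =ᶠ[𝓝 x]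
        (fun t => AA1 u (t, y)) := by
      filter_upwards [isOpen_Ioi.eventually_mem hx] with t ht
      exact (hA1eq ht hy).symm
    exact hmul.congr_of_eventuallyEq hev.symm
  -- derivative of AA1 slice in y
  have hA1y : ∀ {x y : ℝ}, 0 < x → 0 < y →
      fderiv ℝ (AA1 u) (x, y) (0, 1)
        = -(2 * y ^ 1) * u x y + ((ν ^ 2 - 1 / 4) / x ^ 2 - y ^ 2) * BB u (x, y) := by
    intro x y hx hy
    have hq : HasDerivAt (fun t : ℝ => (ν ^ 2 - 1 / 4) / x ^ 2 - t ^ 2)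
        (-(2 * y ^ 1)) y := (hasDerivAt_pow 2 y).const_sub ((ν ^ 2 - 1 / 4) / x ^ 2)
    have hmul := hq.mul (hUs2 hx hy)
    have hev : (fun t => ((ν ^ 2 - 1 / 4) / x ^ 2 - t ^ 2) * u x t) =ᶠ[𝓝 y]
        (fun t => AA1 u (x, t)) := by
      filter_upwards [isOpen_Ioi.eventually_mem hy] with t ht
      exact (hA1eq hx ht).symm
    have h1 : HasDerivAt (fun t => AA1 u (x, t))
        (-(2 * y ^ 1) * u x y + ((ν ^ 2 - 1 / 4) / x ^ 2 - y ^ 2) * BB u (x, y)) y :=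
      hmul.congr_of_eventuallyEq hev.symm
    exact (slice2 (hdiffAt _ hA1 (hmem hx hy))).unique h1
  -- main part 1
  have key : ∀ x > (0:ℝ), ∀ y > (0:ℝ),
      u x y * pd1 w x y - pd1 u x y * w x y = -4 / Real.pi ^ 2 := by
    intro x hx y hy
    set g : ℝ → ℝ := fun t => t * AA u (t, y) - y * BB u (t, y) with hg_def
    set g' : ℝ → ℝ := fun t => AA u (t, y) + t * AA1 u (t, y) - y * AA2 u (t, y) with hg'_def
    set W : ℝ → ℝ := fun t => u t y * g' t - AA u (t, y) * g t with hW_def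
    have hAs1 : ∀ t, 0 < t → HasDerivAt (fun s => AA u (s, y)) (AA1 u (t, y)) t :=
      fun t ht => slice1 (hdiffAt _ hA (hmem ht hy))
    have hgd : ∀ t, 0 < t → HasDerivAt g (g' t) t := by
      intro t ht
      have h1 : HasDerivAt (fun s => s * AA u (s, y))
          (1 * AA u (t, y) + t * AA1 u (t, y)) t := (hasDerivAt_id t).mul (hAs1 t ht)
      have h2 : HasDerivAt (fun s => y * BB u (s, y)) (y * AA2 u (t, y)) t := by
        have h3 := (slice1 (hdiffAt _ hB (hmem ht hy))).const_mul y
        rwa [hswap1 ht hy] at h3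
      have h4 := h1.sub h2
      rw [hg'_def]
      exact h4.congr_deriv (by simp)
    have hg'd : ∀ t, 0 < t → HasDerivAt g'
        (AA1 u (t, y)
          + (1 * AA1 u (t, y) + t * ((0 * t ^ 2 - (ν ^ 2 - 1 / 4) * (2 * t ^ 1)) / (t ^ 2) ^ 2 * u t y
              + ((ν ^ 2 - 1 / 4) / t ^ 2 - y ^ 2) * AA u (t, y)))
          - y * (-(2 * y ^ 1) * u t y + ((ν ^ 2 - 1 / 4) / t ^ 2 - y ^ 2) * BB u (t, y))) t := by
      intro t ht
      have c1 := hAs1 t ht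
      have c2 : HasDerivAt (fun s => s * AA1 u (s, y))
          (1 * AA1 u (t, y) + t * ((0 * t ^ 2 - (ν ^ 2 - 1 / 4) * (2 * t ^ 1)) / (t ^ 2) ^ 2 * u t y
            + ((ν ^ 2 - 1 / 4) / t ^ 2 - y ^ 2) * AA u (t, y))) t :=
        (hasDerivAt_id t).mul (hA1x ht hy)
      have c3 : HasDerivAt (fun s => y * AA2 u (s, y))
          (y * (-(2 * y ^ 1) * u t y + ((ν ^ 2 - 1 / 4) / t ^ 2 - y ^ 2) * BB u (t, y))) t := by
        have c4 := (slice1 (hdiffAt _ hA2 (hmem ht hy))).const_mul y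
        rwa [hswap2 ht hy, hA1y ht hy] at c4
      have := (c1.add c2).sub c3
      rw [hg'_def]
      exact this
    have hWd : ∀ t, 0 < t → HasDerivAt W 0 t := by
      intro t ht
      have hp := ((hUs1 ht hy).mul (hg'd t ht)).sub ((hAs1 t ht).mul (hgd t ht))
      rw [hW_def]
      refine hp.congr_deriv ?_
      rw [hA1eq ht hy, hg_def, hg'_def]
      have ht' : (t:ℝ) ≠ 0 := ne_of_gt ht
      field_simp
      ring
    have hWdiff : DifferentiableOn ℝ W (Ioi 0) :=
      fun t ht => ((hWd t ht).differentiableAt).differentiableWithinAt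
    have hconst : W x = W 1 := by
      apply (convex_Ioi (0:ℝ)).is_const_of_fderivWithin_eq_zero hWdiff ?_ hx (mem_Ioi.2 one_pos)
      intro t ht
      rw [fderivWithin_of_isOpen isOpen_Ioi ht, (hWd t ht).hasFDerivAt.fderiv]
      ext
      simp
    have hU1y : u 1 y = 0 := hbc y hy
    have hA10 : AA u (1, y) = 2 / Real.pi := by rw [← hpd1A one_pos hy]; exact hbc' y hy
    have hB1y : BB u (1, y) = 0 := by
      rw [← hpd2B one_pos hy]
      have hev : (fun t => u 1 t) =ᶠ[𝓝 y] (fun _ => (0:ℝ)) := by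
        filter_upwards [isOpen_Ioi.eventually_mem hy] with t ht
        exact hbc t ht
      rw [pd2, hev.deriv_eq]
      simp
    have hW1 : W 1 = -4 / Real.pi ^ 2 := by
      rw [hW_def]
      simp only [hg_def, hg'_def, hU1y, hA10, hB1y]
      field_simp
      ring
    have hwg : ∀ t, 0 < t → w t y = g t := by
      intro t ht
      rw [hw, hpd1A ht hy, hpd2B ht hy, hg_def]
    have hpd1w : pd1 w x y = g' x := by
      have hev : (fun t => w t y) =ᶠ[𝓝 x] g := by
        filter_upwards [isOpen_Ioi.eventually_mem hx] with t ht
        exact hwg t ht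
      rw [show pd1 w x y = deriv (fun t => w t y) x from rfl, hev.deriv_eq]
      exact (hgd x hx).deriv
    calc u x y * pd1 w x y - pd1 u x y * w x y = W x := by
          rw [hpd1w, hpd1A hx hy, hwg x hx, hW_def]
      _ = W 1 := hconst
      _ = -4 / Real.pi ^ 2 := hW1
  refine ⟨key, ?_⟩
  intro x₀ hx₀ y₀ hy₀ h0
  have h1 := key x₀ hx₀ y₀ hy₀
  rw [h0, hw] at h1
  have h2 : -4 / Real.pi ^ 2 = -(4 / Real.pi ^ 2) := by ring
  rw [h2] at h1
  nlinarith [h1]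
end

section
/- Let u(x,y) be a smooth function with u_{xx} = q·u, and let y_k be a differentiable function with u(x, y_k(x)) = 0 and u_y(x, y_k(x)) ≠ 0 for all x. If u_x·u_y·(2u_{xy}·u_y − u_{yy}·u_x) > 0 at every point of the zero set of u, then y_k is convex, i.e., y_k''(x) > 0 for all x. -/
open Real Set

set_option maxHeartbeats 1000000

theorem stmt_10 (c d c' d' : ℝ) (q u : ℝ → ℝ → ℝ)
    (hqsmooth : ContDiffOn ℝ (⊤ : ℕ∞) (fun p : ℝ × ℝ => q p.1 p.2) (Ioo c d ×ˢ Ioo c' d'))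
    (husmooth : ContDiffOn ℝ (⊤ : ℕ∞) (fun p : ℝ × ℝ => u p.1 p.2) (Ioo c d ×ˢ Ioo c' d'))
    (hode : ∀ x ∈ Ioo c d, ∀ y ∈ Ioo c' d', pd1 (pd1 u) x y = q x y * u x y)
    (yk : ℝ → ℝ)
    (hyk_mem : ∀ x ∈ Ioo c d, yk x ∈ Ioo c' d')
    (hyk_diff : ∀ x ∈ Ioo c d, DifferentiableAt ℝ yk x)
    (hyk_diff' : ∀ x ∈ Ioo c d, DifferentiableAt ℝ (deriv yk) x)
    (hzero : ∀ x ∈ Ioo c d, u x (yk x) = 0)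
    (huy : ∀ x ∈ Ioo c d, pd2 u x (yk x) ≠ 0)
    (hsign : ∀ x ∈ Ioo c d, ∀ y ∈ Ioo c' d', u x y = 0 →
      0 < pd1 u x y * pd2 u x y *
        (2 * pd2 (pd1 u) x y * pd2 u x y - pd2 (pd2 u) x y * pd1 u x y)) :
    ∀ x ∈ Ioo c d, 0 < deriv (deriv yk) x := by
  intro x hx
  have hso : IsOpen (Ioo c d ×ˢ Ioo c' d' : Set (ℝ × ℝ)) := isOpen_Ioo.prod isOpen_Ioo
  set U : ℝ × ℝ → ℝ := fun p => u p.1 p.2 with hUdef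
  set D : ℝ × ℝ → (ℝ × ℝ →L[ℝ] ℝ) := fun p => fderiv ℝ U p with hDdef
  have hD : ContDiffOn ℝ (⊤ : ℕ∞) D (Ioo c d ×ˢ Ioo c' d') :=
    husmooth.fderiv_of_isOpen hso (by simp)
  have hUd : ∀ r ∈ Ioo c d ×ˢ Ioo c' d', HasFDerivAt U (D r) r := fun r hr =>
    ((husmooth.contDiffAt (hso.mem_nhds hr)).differentiableAt (by simp)).hasFDerivAt
  -- pd identities on the open set
  have hpd1 : ∀ r ∈ Ioo c d ×ˢ Ioo c' d', pd1 u r.1 r.2 = D r (1, 0) := by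
    intro r hr
    have h1 : HasDerivAt (fun t => ((t, r.2) : ℝ × ℝ)) ((1 : ℝ), (0 : ℝ)) r.1 :=
      HasDerivAt.prodMk (hasDerivAt_id r.1) (hasDerivAt_const r.1 r.2)
    have h2 : HasDerivAt (fun t => u t r.2) (D r (1, 0)) r.1 :=
      by have := (hUd r hr).comp_hasDerivAt r.1 h1; exact this
    exact h2.deriv
  have hpd2 : ∀ r ∈ Ioo c d ×ˢ Ioo c' d', pd2 u r.1 r.2 = D r (0, 1) := by
    intro r hr
    have h1 : HasDerivAt (fun t => ((r.1, t) : ℝ × ℝ)) ((0 : ℝ), (1 : ℝ)) r.2 :=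
      HasDerivAt.prodMk (hasDerivAt_const r.2 r.1) (hasDerivAt_id r.2)
    have h2 : HasDerivAt (fun t => u r.1 t) (D r (0, 1)) r.2 :=
      by have := (hUd r hr).comp_hasDerivAt r.2 h1; exact this
    exact h2.deriv
  have hyx := hyk_mem x hx
  have hps : ((x, yk x) : ℝ × ℝ) ∈ Ioo c d ×ˢ Ioo c' d' := ⟨hx, hyx⟩
  have hsn : Ioo c d ×ˢ Ioo c' d' ∈ nhds ((x, yk x) : ℝ × ℝ) := hso.mem_nhds hps
  set D' : ℝ × ℝ →L[ℝ] ℝ × ℝ →L[ℝ] ℝ := fderiv ℝ D (x, yk x) with hD'def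
  have hDd : HasFDerivAt D D' (x, yk x) :=
    ((hD.contDiffAt hsn).differentiableAt (by simp)).hasFDerivAt
  have hsymm : ∀ v w : ℝ × ℝ, D' v w = D' w v := by
    intro v w
    refine second_derivative_symmetric_of_eventually (f := U) ?_ hDd v w
    filter_upwards [hsn] with r hr using hUd r hr
  -- second partials in the second variable
  have hDt2 : HasDerivAt (fun t => D (x, t)) (D' (0, 1)) (yk x) := by
    have h1 : HasDerivAt (fun t => ((x, t) : ℝ × ℝ)) ((0 : ℝ), (1 : ℝ)) (yk x) :=
      HasDerivAt.prodMk (hasDerivAt_const (yk x) x) (hasDerivAt_id (yk x))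
    exact hDd.comp_hasDerivAt (yk x) h1
  have happ2 : ∀ v : ℝ × ℝ, HasDerivAt (fun t => D (x, t) v) (D' (0, 1) v) (yk x) := fun v =>
    (ContinuousLinearMap.apply ℝ ℝ v).hasFDerivAt.comp_hasDerivAt (yk x) hDt2
  have hM : pd2 (pd1 u) x (yk x) = D' (0, 1) (1, 0) := by
    have hev : (fun t => pd1 u x t) =ᶠ[nhds (yk x)] fun t => D (x, t) (1, 0) := by
      filter_upwards [isOpen_Ioo.mem_nhds hyx] with t ht using hpd1 (x, t) ⟨hx, ht⟩
    calc pd2 (pd1 u) x (yk x) = deriv (fun t => pd1 u x t) (yk x) := rfl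
      _ = deriv (fun t => D (x, t) (1, 0)) (yk x) := hev.deriv_eq
      _ = D' (0, 1) (1, 0) := (happ2 (1, 0)).deriv
  have hN : pd2 (pd2 u) x (yk x) = D' (0, 1) (0, 1) := by
    have hev : (fun t => pd2 u x t) =ᶠ[nhds (yk x)] fun t => D (x, t) (0, 1) := by
      filter_upwards [isOpen_Ioo.mem_nhds hyx] with t ht using hpd2 (x, t) ⟨hx, ht⟩
    calc pd2 (pd2 u) x (yk x) = deriv (fun t => pd2 u x t) (yk x) := rfl
      _ = deriv (fun t => D (x, t) (0, 1)) (yk x) := hev.deriv_eq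
      _ = D' (0, 1) (0, 1) := (happ2 (0, 1)).deriv
  -- second partial in the first variable, and the ODE
  have hDt1 : HasDerivAt (fun t => D (t, yk x)) (D' (1, 0)) x := by
    have h1 : HasDerivAt (fun t => ((t, yk x) : ℝ × ℝ)) ((1 : ℝ), (0 : ℝ)) x :=
      HasDerivAt.prodMk (hasDerivAt_id x) (hasDerivAt_const x (yk x))
    exact hDd.comp_hasDerivAt x h1
  have hK : pd1 (pd1 u) x (yk x) = D' (1, 0) (1, 0) := by
    have hev : (fun t => pd1 u t (yk x)) =ᶠ[nhds x] fun t => D (t, yk x) (1, 0) := by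
      filter_upwards [isOpen_Ioo.mem_nhds hx] with t ht using hpd1 (t, yk x) ⟨ht, hyx⟩
    calc pd1 (pd1 u) x (yk x) = deriv (fun t => pd1 u t (yk x)) x := rfl
      _ = deriv (fun t => D (t, yk x) (1, 0)) x := hev.deriv_eq
      _ = D' (1, 0) (1, 0) :=
        ((ContinuousLinearMap.apply ℝ ℝ ((1 : ℝ), (0 : ℝ))).hasFDerivAt.comp_hasDerivAt x
          hDt1).deriv
  have hKzero : D' (1, 0) (1, 0) = 0 := by
    rw [← hK, hode x hx (yk x) hyx, hzero x hx, mul_zero]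
  -- first derivative equation on the whole interval
  have key1 : ∀ z ∈ Ioo c d,
      D (z, yk z) (1, 0) + deriv yk z * D (z, yk z) (0, 1) = 0 := by
    intro z hz
    have hz2 := hyk_mem z hz
    have hγ : HasDerivAt (fun t => ((t, yk t) : ℝ × ℝ)) ((1 : ℝ), deriv yk z) z :=
      HasDerivAt.prodMk (hasDerivAt_id z) (hyk_diff z hz).hasDerivAt
    have hg : HasDerivAt (fun t => U (t, yk t)) (D (z, yk z) (1, deriv yk z)) z :=
      by have := (hUd (z, yk z) ⟨hz, hz2⟩).comp_hasDerivAt z hγ; exact this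
    have hg0 : (fun _ : ℝ => (0 : ℝ)) =ᶠ[nhds z] fun t => U (t, yk t) := by
      filter_upwards [isOpen_Ioo.mem_nhds hz] with t ht using (hzero t ht).symm
    have h0 : D (z, yk z) (1, deriv yk z) = 0 := by
      have := (hg.congr_of_eventuallyEq hg0).unique (hasDerivAt_const z 0)
      simpa using this
    have hsplit : ((1 : ℝ), deriv yk z) = ((1 : ℝ), (0 : ℝ)) + deriv yk z • ((0 : ℝ), (1 : ℝ)) := by
      simp
    rw [hsplit, map_add, map_smul] at h0
    simpa [smul_eq_mul] using h0
  -- differentiate the first derivative equation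
  have hγx : HasDerivAt (fun t => ((t, yk t) : ℝ × ℝ)) ((1 : ℝ), deriv yk x) x :=
    HasDerivAt.prodMk (hasDerivAt_id x) (hyk_diff x hx).hasDerivAt
  have hDγ : HasDerivAt (fun t => D (t, yk t)) (D' (1, deriv yk x)) x :=
    hDd.comp_hasDerivAt x hγx
  have happγ : ∀ v : ℝ × ℝ,
      HasDerivAt (fun t => D (t, yk t) v) (D' (1, deriv yk x) v) x := fun v =>
    (ContinuousLinearMap.apply ℝ ℝ v).hasFDerivAt.comp_hasDerivAt x hDγ
  have hφ' : HasDerivAt (fun z => D (z, yk z) (1, 0) + deriv yk z * D (z, yk z) (0, 1))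
      (D' (1, deriv yk x) (1, 0) +
        (deriv (deriv yk) x * D (x, yk x) (0, 1) + deriv yk x * D' (1, deriv yk x) (0, 1))) x :=
    (happγ (1, 0)).add ((hyk_diff' x hx).hasDerivAt.mul (happγ (0, 1)))
  have hφ0 : (fun _ : ℝ => (0 : ℝ)) =ᶠ[nhds x]
      fun z => D (z, yk z) (1, 0) + deriv yk z * D (z, yk z) (0, 1) := by
    filter_upwards [isOpen_Ioo.mem_nhds hx] with z hz using (key1 z hz).symm
  have heq2 : D' (1, deriv yk x) (1, 0) +
      (deriv (deriv yk) x * D (x, yk x) (0, 1) + deriv yk x * D' (1, deriv yk x) (0, 1)) = 0 := by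
    have := (hφ'.congr_of_eventuallyEq hφ0).unique (hasDerivAt_const x 0)
    simpa using this
  -- split the directional second derivative
  have hsplit : D' ((1 : ℝ), deriv yk x) = D' (1, 0) + deriv yk x • D' (0, 1) := by
    rw [show ((1 : ℝ), deriv yk x) = ((1 : ℝ), (0 : ℝ)) + deriv yk x • ((0 : ℝ), (1 : ℝ)) by simp,
      map_add, map_smul]
  -- abbreviations
  set a : ℝ := D (x, yk x) (1, 0) with ha
  set b : ℝ := D (x, yk x) (0, 1) with hb
  set m : ℝ := D' (0, 1) (1, 0) with hm
  set n : ℝ := D' (0, 1) (0, 1) with hn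
  set c₁ : ℝ := deriv yk x with hc₁
  set c₂ : ℝ := deriv (deriv yk) x with hc₂
  have e1 : a + c₁ * b = 0 := key1 x hx
  have hsym10 : D' (1, 0) (0, 1) = m := hsymm (1, 0) (0, 1)
  have e2 : 2 * c₁ * m + c₂ * b + c₁ ^ 2 * n = 0 := by
    rw [hsplit] at heq2
    simp only [ContinuousLinearMap.add_apply, ContinuousLinearMap.smul_apply,
      smul_eq_mul, hKzero, hsym10] at heq2
    linarith [heq2]
  have hbne : b ≠ 0 := by
    have := huy x hx
    rwa [hpd2 (x, yk x) hps] at this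
  have hs : 0 < a * b * (2 * m * b - n * a) := by
    have := hsign x hx (yk x) hyx (hzero x hx)
    rwa [hpd1 (x, yk x) hps, hpd2 (x, yk x) hps, hM, hN] at this
  have key : c₂ * b ^ 4 = a * b * (2 * m * b - n * a) := by
    linear_combination (b ^ 3) * e2 + (-2 * b ^ 2 * m + b * n * (a - c₁ * b)) * e1
  have hb4 : 0 < b ^ 4 := by positivity
  have hpos : 0 < c₂ * b ^ 4 := key ▸ hs
  have hc : c₂ = c₂ * b ^ 4 / b ^ 4 := by field_simp
  rw [hc]
  positivity
end

section
/- Let h : (0,∞) → (0,∞) be differentiable and suppose that t ↦ −t·h'(t)/h(t) is strictly increasing on (0,∞). Then for any b > 1, the function t ↦ h(bt)/h(t) is strictly decreasing on (0,∞). -/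
/-!
By the quotient rule, the derivative of `h(bt)/h(t)` has the sign of
`b h'(bt) h(t) - h(bt) h'(t)`, which after dividing by `h(t) h(bt) / t > 0` is
`φ(t) - φ(bt)` for `φ(t) = -t h'(t)/h(t)`; this is negative because `φ` is increasing and `t < bt`.
-/

open Set

lemma hasDerivAt_comp_mul_div_self {h : ℝ → ℝ} {b t : ℝ}
    (hbt : DifferentiableAt ℝ h (b * t)) (ht : DifferentiableAt ℝ h t) (h0 : h t ≠ 0) :
    HasDerivAt (fun s => h (b * s) / h s)
      ((deriv h (b * t) * b * h t - h (b * t) * deriv h t) / h t ^ 2) t := by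
  have hscale : HasDerivAt (fun s => h (b * s)) (deriv h (b * t) * b) t :=
    hbt.hasDerivAt.comp t (by simpa using (hasDerivAt_id t).const_mul b)
  exact hscale.div ht.hasDerivAt h0

-- `u, v, du, dv` stand for `h t, h (b t), h' t, h' (b t)`.
lemma quotient_numerator_neg_of_neg_mul_div_lt {b t u v du dv : ℝ} (ht : 0 < t)
    (hu : 0 < u) (hv : 0 < v) (hlt : -t * du / u < -(b * t) * dv / v) :
    dv * b * u - v * du < 0 := by
  rw [div_lt_div_iff₀ hu hv] at hlt
  nlinarith

theorem stmt_19 (h : ℝ → ℝ)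
    (hpos : ∀ t > (0:ℝ), 0 < h t)
    (hdiff : ∀ t > (0:ℝ), DifferentiableAt ℝ h t)
    (hmono : StrictMonoOn (fun t => -t * deriv h t / h t) (Ioi 0))
    (b : ℝ) (hb : 1 < b) :
    StrictAntiOn (fun t => h (b * t) / h t) (Ioi 0) := by
  have hderiv : ∀ t ∈ Ioi (0:ℝ), HasDerivAt (fun s => h (b * s) / h s)
      ((deriv h (b * t) * b * h t - h (b * t) * deriv h t) / h t ^ 2) t := fun t ht =>
    have hbt : 0 < b * t := mul_pos (one_pos.trans hb) ht
    hasDerivAt_comp_mul_div_self (hdiff _ hbt) (hdiff t ht) (hpos t ht).ne'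
  refine strictAntiOn_of_deriv_neg (convex_Ioi 0)
    (fun t ht => (hderiv t ht).continuousAt.continuousWithinAt) fun t ht => ?_
  rw [interior_Ioi] at ht
  have hbt : 0 < b * t := mul_pos (one_pos.trans hb) ht
  rw [(hderiv t ht).deriv]
  refine div_neg_of_neg_of_pos ?_ (pow_pos (hpos t ht) 2)
  exact quotient_numerator_neg_of_neg_mul_div_lt ht (hpos t ht) (hpos _ hbt)
    (hmono ht hbt (lt_mul_of_one_lt_left ht hb))
end
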